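/- Let X be a set, let P and Q be nonempty words in the free semigroup on X, and let S be the semigroup presented by generators {a} ∪ X (a ∉ X) with the single defining relation aP = Q, i.e. the quotient of the free semigroup on {a} ∪ X by the smallest congruence identifying the words aP and Q. Then H²(S,A) = 0 for every S-module A, and c.d. S = 1. -/

import Mathlib

structure SgModule (S : Type) [Semigroup S] where
  carrier : Type
  [grp : AddCommGroup carrier]
  smul : S → carrier → carrier
  smul_add : ∀ s a b, smul s (a + b) = smul s a + smul s b
  mul_smul : ∀ s t a, smul (s * t) a = smul s (smul t a)

attribute [instance] SgModule.grp

/-- `altSign k a = (-1)^k • a`. -/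
def altSign {A : Type} [AddCommGroup A] (k : ℕ) (a : A) : A :=
  if Even k then a else -a

lemma altSign_add {A : Type} [AddCommGroup A] (k : ℕ) (a b : A) :
    altSign k (a + b) = altSign k a + altSign k b := by
  unfold altSign; split <;> [rfl; exact neg_add a b]

def mulContract {S : Type} [Mul S] {n : ℕ} (x : Fin (n + 1) → S) (i : Fin n) :
    Fin n → S := fun j =>
  if (j : ℕ) < (i : ℕ) then x j.castSucc
  else if (j : ℕ) = (i : ℕ) then x j.castSucc * x j.succ
  else x j.succ

namespace SgModule

variable {S : Type} [Semigroup S] (M : SgModule S)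

abbrev cochain (n : ℕ) : Type := (Fin n → S) → M.carrier

def cobFun {n : ℕ} (f : M.cochain n) : M.cochain (n + 1) := fun x =>
  M.smul (x 0) (f (Fin.tail x))
    + (∑ i : Fin n, altSign ((i : ℕ) + 1) (f (mulContract x i)))
    + altSign (n + 1) (f (Fin.init x))

lemma cobFun_add {n : ℕ} (f g : M.cochain n) :
    M.cobFun (f + g) = M.cobFun f + M.cobFun g := by
  funext x
  show M.cobFun (f + g) x = M.cobFun f x + M.cobFun g x
  unfold cobFun
  simp only [Pi.add_apply, altSign_add, M.smul_add]
  rw [Finset.sum_add_distrib]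
  abel

def cob (n : ℕ) : M.cochain n →+ M.cochain (n + 1) :=
  AddMonoidHom.mk' M.cobFun M.cobFun_add

def cocycles (n : ℕ) : AddSubgroup (M.cochain n) := (M.cob n).ker

def cobounds : (n : ℕ) → AddSubgroup (M.cochain n)
  | 0 => ⊥
  | n + 1 => (M.cob n).range

def cohomology (n : ℕ) : Type :=
  M.cocycles n ⧸ (M.cobounds n).addSubgroupOf (M.cocycles n)

noncomputable instance (n : ℕ) : AddCommGroup (M.cohomology n) := by
  unfold cohomology; infer_instance

end SgModule

noncomputable def cohDim (S : Type) [Semigroup S] : ℕ∞ :=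
  sSup {e : ℕ∞ | ∃ n : ℕ, e = (n : ℕ∞) ∧ ∃ M : SgModule S, Nontrivial (M.cohomology n)}

def IsFreeSemigroup (T : Type) [Semigroup T] : Prop :=
  ∃ X : Type, Nonempty (T ≃* FreeSemigroup X)


/-- The semigroup `S = ⟨a, X ∣ aP = Q⟩`, where `P` and `Q` are nonempty words
in the alphabet `X` (elements of the free semigroup on `X`) and `a ∉ X` (here
`a` is the generator `none`, and `X` is embedded as `some`). -/
def relAPQ (X : Type) (P Q : FreeSemigroup X) : Con (FreeSemigroup (Option X)) :=
  conGen (fun u v =>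
    u = FreeSemigroup.of none * FreeSemigroup.map (some : X → Option X) P ∧
      v = FreeSemigroup.map (some : X → Option X) Q)

/-!
A 2-cocycle `f` of `S` with values in `A` is a coboundary as soon as the extension `S ×_f A` has
a multiplicative section. For `S = ⟨a, X ∣ aP = Q⟩` such a section is induced by the lift of
`x ↦ (x, 0)`, `a ↦ (a, r)` from the free semigroup, provided the lift respects `aP = Q`; as `a`
occurs only once, in front, this is a single linear equation for `r`, which can be solved.
Hence `H²(S, A) = 0` for all `A`, and dimension shifting along
`0 → A → Map(S¹, A) → Map(S¹, A) / A → 0`, whose middle term is acyclic in positive degrees,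
gives `Hⁿ(S, A) = 0` for all `n ≥ 2`. Finally `H¹(S, ℤ) ≠ 0` for the trivial action, witnessed
by the grading `deg x = 1`, `deg a = |Q| - |P|`.
-/

section AltSign

variable {A B : Type} [AddCommGroup A] [AddCommGroup B]

lemma altSign_zero (a : A) : altSign 0 a = a := rfl

lemma altSign_succ (k : ℕ) (a : A) : altSign (k + 1) a = -altSign k a := by
  unfold altSign
  by_cases h : Even k <;> simp [h, Nat.even_add_one]

lemma altSign_one (a : A) : altSign 1 a = -a := altSign_succ 0 a

lemma altSign_two (a : A) : altSign 2 a = a := by rw [altSign_succ, altSign_one, neg_neg]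

lemma altSign_three (a : A) : altSign 3 a = -a := by rw [altSign_succ, altSign_two]

lemma altSign_zero_right (k : ℕ) : altSign k (0 : A) = 0 := by
  unfold altSign; split <;> simp

lemma map_altSign (φ : A →+ B) (k : ℕ) (a : A) : φ (altSign k a) = altSign k (φ a) := by
  unfold altSign; split <;> simp

end AltSign

section Tuples

variable {S : Type} {n : ℕ}

lemma Fin.init_cons (a : S) (y : Fin (n + 1) → S) :
    Fin.init (Fin.cons a y : Fin (n + 2) → S) = Fin.cons a (Fin.init y) := by
  funext k
  refine Fin.cases ?_ (fun k => ?_) k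
  · rfl
  · simp only [Fin.init, Fin.cons_succ, ← Fin.succ_castSucc]

variable [Mul S]

lemma mulContract_cons_zero (a : S) (y : Fin (n + 1) → S) :
    mulContract (Fin.cons a y) 0 = Fin.cons (a * y 0) (Fin.tail y) := by
  funext j
  refine Fin.cases ?_ (fun j => ?_) j
  · simp [mulContract]
  · simp [mulContract, Fin.tail]

lemma mulContract_cons_succ (a : S) (y : Fin (n + 1) → S) (j : Fin n) :
    mulContract (Fin.cons a y) j.succ = Fin.cons a (mulContract y j) := by
  funext k
  refine Fin.cases ?_ (fun k => ?_) k
  · simp [mulContract]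
  · simp only [mulContract, Fin.val_succ, Fin.cons_succ, ← Fin.succ_castSucc, add_lt_add_iff_right,
      add_left_inj]

end Tuples

namespace SgModule

variable {S : Type} [Semigroup S] (M : SgModule S)

def smulHom (s : S) : M.carrier →+ M.carrier := AddMonoidHom.mk' (M.smul s) (M.smul_add s)

lemma smul_neg (s : S) (a : M.carrier) : M.smul s (-a) = -M.smul s a := map_neg (M.smulHom s) a

lemma smul_sub (s : S) (a b : M.carrier) : M.smul s (a - b) = M.smul s a - M.smul s b :=
  map_sub (M.smulHom s) a b

lemma smul_sum {ι : Type} (s : S) (t : Finset ι) (g : ι → M.carrier) :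
    M.smul s (∑ i ∈ t, g i) = ∑ i ∈ t, M.smul s (g i) :=
  map_sum (M.smulHom s) g t

lemma smul_altSign (s : S) (k : ℕ) (a : M.carrier) :
    M.smul s (altSign k a) = altSign k (M.smul s a) :=
  map_altSign (M.smulHom s) k a

lemma cobFun_apply {n : ℕ} (f : M.cochain n) (x : Fin (n + 1) → S) :
    M.cobFun f x = M.smul (x 0) (f (Fin.tail x))
      + (∑ i : Fin n, altSign ((i : ℕ) + 1) (f (mulContract x i)))
      + altSign (n + 1) (f (Fin.init x)) := rfl

lemma cobFun_sub {n : ℕ} (f g : M.cochain n) : M.cobFun (f - g) = M.cobFun f - M.cobFun g :=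
  map_sub (M.cob n) f g

lemma cobFun_zero_apply (c : M.cochain 0) (x : Fin 1 → S) :
    M.cobFun c x = M.smul (x 0) (c ![]) - c ![] := by
  simp [cobFun_apply, altSign_one, Subsingleton.elim (Fin.tail x) ![],
    Subsingleton.elim (Fin.init x) ![], sub_eq_add_neg]

lemma cobFun_one_apply (g : M.cochain 1) (x : Fin 2 → S) :
    M.cobFun g x = M.smul (x 0) (g ![x 1]) - g ![x 0 * x 1] + g ![x 0] := by
  have htail : Fin.tail x = ![x 1] := by ext i; fin_cases i; rfl
  have hinit : Fin.init x = ![x 0] := by ext i; fin_cases i; rfl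
  have hcontr : mulContract x 0 = ![x 0 * x 1] := by ext i; fin_cases i; simp [mulContract]
  simp only [cobFun_apply, Fin.sum_univ_one, htail, hinit, hcontr, Fin.val_zero, Nat.reduceAdd,
    altSign_one, altSign_two]
  abel

lemma cobFun_two_apply (f : M.cochain 2) (x : Fin 3 → S) :
    M.cobFun f x = M.smul (x 0) (f ![x 1, x 2]) - f ![x 0 * x 1, x 2] + f ![x 0, x 1 * x 2]
      - f ![x 0, x 1] := by
  have htail : Fin.tail x = ![x 1, x 2] := by ext i; fin_cases i <;> rfl
  have hinit : Fin.init x = ![x 0, x 1] := by ext i; fin_cases i <;> rfl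
  have hcontr0 : mulContract x 0 = ![x 0 * x 1, x 2] := by
    ext i; fin_cases i <;> simp [mulContract]
  have hcontr1 : mulContract x 1 = ![x 0, x 1 * x 2] := by
    ext i; fin_cases i <;> simp [mulContract]
  simp only [cobFun_apply, Fin.sum_univ_two, htail, hinit, hcontr0, hcontr1, Fin.val_zero,
    Fin.val_one, Nat.reduceAdd, altSign_one, altSign_two, altSign_three]
  abel

lemma subsingleton_cohomology_succ {M : SgModule S} {n : ℕ}
    (h : ∀ f : M.cochain (n + 1), M.cobFun f = 0 → ∃ g, M.cobFun g = f) :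
    Subsingleton (M.cohomology (n + 1)) := by
  have htop : (M.cobounds (n + 1)).addSubgroupOf (M.cocycles (n + 1)) = ⊤ := by
    rw [AddSubgroup.eq_top_iff']
    rintro ⟨f, hf⟩
    exact AddSubgroup.mem_addSubgroupOf.2 (h f hf)
  unfold cohomology
  rw [htop]
  exact QuotientAddGroup.subsingleton_quotient_top

lemma nontrivial_cohomology_succ {M : SgModule S} {n : ℕ} (f : M.cochain (n + 1))
    (hf : M.cobFun f = 0) (hnot : ∀ g, M.cobFun g ≠ f) : Nontrivial (M.cohomology (n + 1)) := by
  refine ⟨⟨QuotientAddGroup.mk ⟨f, hf⟩, 0, fun h => ?_⟩⟩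
  obtain ⟨g, hg⟩ := AddSubgroup.mem_addSubgroupOf.1 ((QuotientAddGroup.eq_zero_iff _).1 h)
  exact hnot g hg

-- Splitting off the first argument expresses `∂` in degree `m + 1` through `∂` in degree `m`,
-- so that `∂ ∘ ∂ = 0` follows by induction on the degree.
lemma cobFun_cons {m : ℕ} (f : M.cochain (m + 1)) (a : S) (y : Fin (m + 1) → S) :
    M.cobFun f (Fin.cons a y)
      = M.smul a (f y) - f (Fin.cons (a * y 0) (Fin.tail y))
        - M.cobFun (fun z => f (Fin.cons a z)) y
        + M.smul (y 0) (f (Fin.cons a (Fin.tail y))) := by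
  simp only [cobFun_apply, Fin.sum_univ_succ, Fin.cons_zero, Fin.tail_cons, mulContract_cons_zero,
    mulContract_cons_succ, Fin.init_cons, Fin.val_succ, Fin.val_zero, altSign_succ, altSign_zero,
    Finset.sum_neg_distrib]
  abel

lemma cobFun_smul_comp {m : ℕ} (f : M.cochain m) (b : S) (y : Fin (m + 1) → S) :
    M.cobFun (fun z => M.smul b (f z)) y
      = M.smul b (M.cobFun f y) + M.smul (y 0 * b) (f (Fin.tail y))
        - M.smul (b * y 0) (f (Fin.tail y)) := by
  simp only [cobFun_apply, M.smul_add, smul_sum, smul_altSign, M.mul_smul]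
  abel

lemma cobFun_comp_mul_head {m : ℕ} (f : M.cochain (m + 1)) (a : S) (y : Fin (m + 2) → S) :
    M.cobFun (fun w => f (Fin.cons (a * w 0) (Fin.tail w))) y
      = M.smul (y 0) (f (Fin.cons (a * y 1) (Fin.tail (Fin.tail y))))
        - f (Fin.cons (a * (y 0 * y 1)) (Fin.tail (Fin.tail y)))
        - M.cobFun (fun z => f (Fin.cons (a * y 0) z)) (Fin.tail y)
        + M.smul (y 1) (f (Fin.cons (a * y 0) (Fin.tail (Fin.tail y)))) := by
  have hy : Fin.tail y 0 = y 1 := rfl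
  conv_lhs => rw [← Fin.cons_self_tail y]
  simp only [cobFun_apply, Fin.sum_univ_succ, Fin.cons_zero, Fin.tail_cons, mulContract_cons_zero,
    mulContract_cons_succ, Fin.init_cons, Fin.val_succ, Fin.val_zero, altSign_succ, altSign_zero,
    Finset.sum_neg_distrib, hy]
  abel

lemma cobFun_smul_head_comp {m : ℕ} (f : M.cochain (m + 1)) (a : S) (y : Fin (m + 2) → S) :
    M.cobFun (fun w => M.smul (w 0) (f (Fin.cons a (Fin.tail w)))) y
      = M.smul (y 0) (M.smul (y 1) (f (Fin.cons a (Fin.tail (Fin.tail y)))))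
        - M.smul (y 0) (M.cobFun (fun z => f (Fin.cons a z)) (Fin.tail y)) := by
  have hy : Fin.tail y 0 = y 1 := rfl
  conv_lhs => rw [← Fin.cons_self_tail y]
  simp only [cobFun_apply, Fin.sum_univ_succ, Fin.cons_zero, Fin.tail_cons, mulContract_cons_zero,
    mulContract_cons_succ, Fin.init_cons, Fin.val_succ, Fin.val_zero, altSign_succ,
    altSign_zero, smul_neg, Finset.sum_neg_distrib, hy, M.smul_add, smul_sum, smul_altSign,
    M.mul_smul]
  abel

theorem cobFun_cobFun {n : ℕ} (f : M.cochain n) : M.cobFun (M.cobFun f) = 0 := by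
  induction n with
  | zero =>
    funext x
    simp only [cobFun_one_apply, cobFun_zero_apply, Matrix.cons_val_zero, smul_sub, M.mul_smul,
      Pi.zero_apply]
    abel
  | succ m ih =>
    funext x
    rw [← Fin.cons_self_tail x, cobFun_cons]
    set a := x 0
    set y := Fin.tail x
    have hsplit : (fun z => M.cobFun f (Fin.cons a z))
        = (fun z => M.smul a (f z)) - (fun z => f (Fin.cons (a * z 0) (Fin.tail z)))
            - M.cobFun (fun z => f (Fin.cons a z))
            + (fun z => M.smul (z 0) (f (Fin.cons a (Fin.tail z)))) :=
      funext fun z => M.cobFun_cons f a z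
    rw [hsplit, cobFun_add, cobFun_sub, cobFun_sub, ih]
    simp only [Pi.add_apply, Pi.sub_apply, Pi.zero_apply]
    rw [cobFun_cons, cobFun_cons, cobFun_smul_comp, cobFun_comp_mul_head, cobFun_smul_head_comp]
    have hy : Fin.tail y 0 = y 1 := rfl
    simp only [M.smul_add, smul_sub, M.mul_smul, mul_assoc, hy]
    abel

lemma cobFun_comp {N : SgModule S} (φ : M.carrier →+ N.carrier)
    (hφ : ∀ s a, φ (M.smul s a) = N.smul s (φ a)) {n : ℕ} (f : M.cochain n) :
    N.cobFun (fun x => φ (f x)) = fun x => φ (M.cobFun f x) := by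
  funext x
  simp only [cobFun_apply, map_add, map_sum, map_altSign, hφ]

def quotient (N : AddSubgroup M.carrier) (hN : ∀ s a, a ∈ N → M.smul s a ∈ N) : SgModule S where
  carrier := M.carrier ⧸ N
  smul s := QuotientAddGroup.map N N (M.smulHom s) (fun a ha => hN s a ha)
  smul_add _ := map_add _
  mul_smul s t b := QuotientAddGroup.induction_on b fun a => congrArg _ (M.mul_smul s t a)

def smulWithOne (o : WithOne S) (a : M.carrier) : M.carrier :=
  WithOne.recOneCoe a (fun t => M.smul t a) o

lemma smulWithOne_mul_coe (o : WithOne S) (s : S) (a : M.carrier) :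
    M.smulWithOne (o * s) a = M.smulWithOne o (M.smul s a) := by
  cases o with
  | one => rw [one_mul]; rfl
  | coe t => exact M.mul_smul t s a

def coind : SgModule S where
  carrier := WithOne S → M.carrier
  smul s ε o := ε (o * s)
  smul_add _ _ _ := rfl
  mul_smul s t ε := funext fun o => by simp only [WithOne.coe_mul, mul_assoc]

lemma coind_smul_apply (s : S) (ε : M.coind.carrier) (o : WithOne S) :
    M.coind.smul s ε o = ε (o * s) := rfl

def coindEval (o : WithOne S) : M.coind.carrier →+ M.carrier :=
  Pi.evalAddMonoidHom (fun _ => M.carrier) o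

lemma coindEval_apply (o : WithOne S) (ε : M.coind.carrier) : M.coindEval o ε = ε o := rfl

def toCoind : M.carrier →+ M.coind.carrier where
  toFun a o := M.smulWithOne o a
  map_zero' := funext fun o => by
    cases o with
    | one => rfl
    | coe t => exact map_zero (M.smulHom t)
  map_add' a b := funext fun o => by
    cases o with
    | one => rfl
    | coe t => exact M.smul_add t a b

lemma toCoind_smul (s : S) (a : M.carrier) :
    M.toCoind (M.smul s a) = M.coind.smul s (M.toCoind a) :=
  funext fun o => (M.smulWithOne_mul_coe o s a).symm

lemma toCoind_injective : Function.Injective M.toCoind := fun _ _ h => congrFun h 1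

def contract {k : ℕ} (F : M.coind.cochain (k + 1)) : M.coind.cochain k :=
  fun v o => WithOne.recOneCoe 0 (fun t => F (Fin.cons t v) 1) o

lemma contract_one {k : ℕ} (F : M.coind.cochain (k + 1)) (v : Fin k → S) :
    M.contract F v 1 = 0 := rfl

lemma contract_coe {k : ℕ} (F : M.coind.cochain (k + 1)) (v : Fin k → S) (t : S) :
    M.contract F v t = M.coindEval 1 (F (Fin.cons t v)) := rfl

lemma cobFun_contract_add_contract_cobFun {k : ℕ} (F : M.coind.cochain (k + 1)) :
    M.coind.cobFun (M.contract F) + M.contract (M.coind.cobFun F) = F := by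
  funext x o
  change M.coindEval o (M.coind.cobFun (M.contract F) x)
    + M.contract (M.coind.cobFun F) x o = M.coindEval o (F x)
  simp only [cobFun_apply, map_add, map_sum, map_altSign]
  cases o with
  | one =>
    simp only [coindEval_apply, coind_smul_apply, one_mul, contract_one, contract_coe,
      altSign_zero_right, Finset.sum_const_zero, add_zero, Fin.cons_self_tail]
  | coe t =>
    simp only [coindEval_apply, coind_smul_apply, contract_coe, ← WithOne.coe_mul,
      cobFun_apply, map_add, map_sum, map_neg, map_altSign, Fin.sum_univ_succ,
      mulContract_cons_zero, mulContract_cons_succ, Fin.init_cons, Fin.cons_zero, Fin.tail_cons, one_mul, Fin.val_zero,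
      Fin.val_succ, altSign_succ, altSign_zero, Finset.sum_neg_distrib]
    abel

lemma cobFun_contract_of_cobFun_eq_zero {k : ℕ} {F : M.coind.cochain (k + 1)}
    (hF : M.coind.cobFun F = 0) : M.coind.cobFun (M.contract F) = F := by
  have h := M.cobFun_contract_add_contract_cobFun F
  have h0 : M.contract (0 : M.coind.cochain (k + 2)) = 0 := funext fun _ => funext fun o => by
    cases o <;> rfl
  rwa [hF, h0, add_zero] at h

lemma toCoind_range_smul_mem (s : S) (ε : M.coind.carrier) (hε : ε ∈ M.toCoind.range) :
    M.coind.smul s ε ∈ M.toCoind.range := by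
  obtain ⟨a, rfl⟩ := hε
  exact ⟨M.smul s a, M.toCoind_smul s a⟩

def coindQuot : SgModule S := M.coind.quotient M.toCoind.range M.toCoind_range_smul_mem

def toCoindQuot : M.coind.carrier →+ M.coindQuot.carrier := QuotientAddGroup.mk' _

lemma toCoindQuot_smul (s : S) (ε : M.coind.carrier) :
    M.toCoindQuot (M.coind.smul s ε) = M.coindQuot.smul s (M.toCoindQuot ε) := rfl

lemma toCoindQuot_eq_zero_iff (ε : M.coind.carrier) :
    M.toCoindQuot ε = 0 ↔ ε ∈ M.toCoind.range :=
  QuotientAddGroup.eq_zero_iff ε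

lemma toCoindQuot_surjective : Function.Surjective M.toCoindQuot :=
  QuotientAddGroup.mk'_surjective _

end SgModule

/-- `Hⁿ⁺¹(S, A) = 0` for every `S`-module `A` (note the shift by one). -/
def CocyclesAreCobounds (S : Type) [Semigroup S] (n : ℕ) : Prop :=
  ∀ (M : SgModule S) (f : M.cochain (n + 1)), M.cobFun f = 0 → ∃ g, M.cobFun g = f

section DimensionShifting

open SgModule

variable {S : Type} [Semigroup S]

theorem CocyclesAreCobounds.succ {n : ℕ} (h : CocyclesAreCobounds S n) :
    CocyclesAreCobounds S (n + 1) := by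
  intro M f hf
  have hιf : M.coind.cobFun (fun x => M.toCoind (f x)) = 0 := by
    rw [cobFun_comp M M.toCoind M.toCoind_smul, hf]
    exact funext fun _ => map_zero _
  set e := M.contract (fun x => M.toCoind (f x))
  have he : M.coind.cobFun e = fun x => M.toCoind (f x) :=
    M.cobFun_contract_of_cobFun_eq_zero hιf
  have hpe : M.coindQuot.cobFun (fun x => M.toCoindQuot (e x)) = 0 := by
    rw [cobFun_comp M.coind M.toCoindQuot M.toCoindQuot_smul, he]
    exact funext fun x => (M.toCoindQuot_eq_zero_iff _).2 ⟨f x, rfl⟩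
  obtain ⟨b, hb⟩ := h M.coindQuot _ hpe
  obtain ⟨b', rfl⟩ : ∃ b' : M.coind.cochain n, (fun x => M.toCoindQuot (b' x)) = b :=
    ⟨fun x => Function.surjInv M.toCoindQuot_surjective (b x),
      funext fun x => Function.surjInv_eq M.toCoindQuot_surjective (b x)⟩
  rw [cobFun_comp M.coind M.toCoindQuot M.toCoindQuot_smul] at hb
  have hmem : ∀ x, (e - M.coind.cobFun b') x ∈ M.toCoind.range := fun x => by
    rw [← toCoindQuot_eq_zero_iff, Pi.sub_apply, map_sub, ← congrFun hb x, sub_self]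
  choose g hg using hmem
  refine ⟨g, funext fun x => M.toCoind_injective ?_⟩
  have hιg : M.coind.cobFun (fun x => M.toCoind (g x)) = fun x => M.toCoind (f x) := by
    rw [funext hg, cobFun_sub, he, cobFun_cobFun, sub_zero]
  exact (congrFun (cobFun_comp M M.toCoind M.toCoind_smul g) x).symm.trans (congrFun hιg x)

theorem CocyclesAreCobounds.mono {m n : ℕ} (h : CocyclesAreCobounds S m) (hmn : m ≤ n) :
    CocyclesAreCobounds S n := by
  induction n, hmn using Nat.le_induction with
  | base => exact h
  | succ n _ ih => exact ih.succ

end DimensionShifting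

section CohDim

open SgModule

variable {S : Type} [Semigroup S]

lemma le_cohDim {n : ℕ} (M : SgModule S) (h : Nontrivial (M.cohomology n)) :
    (n : ℕ∞) ≤ cohDim S :=
  le_sSup ⟨n, rfl, M, h⟩

lemma cohDim_le {d : ℕ} (h : CocyclesAreCobounds S d) : cohDim S ≤ d := by
  refine sSup_le ?_
  rintro _ ⟨n, rfl, M, hM⟩
  by_contra hlt
  obtain ⟨m, rfl⟩ := Nat.exists_eq_add_of_lt (show d < n by exact_mod_cast not_le.1 hlt)
  exact not_subsingleton_iff_nontrivial.2 hM
    (subsingleton_cohomology_succ (h.mono (Nat.le_add_right d m) M))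

end CohDim

namespace SgModule

variable (S : Type) [Semigroup S]

def trivial (A : Type) [AddCommGroup A] : SgModule S where
  carrier := A
  smul _ a := a
  smul_add _ _ _ := rfl
  mul_smul _ _ _ := rfl

variable {S}

lemma nontrivial_cohomology_one_trivial {A : Type} [AddCommGroup A] (χ : S → A)
    (hχ : ∀ s t, χ (s * t) = χ s + χ t) (hne : χ ≠ 0) :
    Nontrivial ((trivial S A).cohomology 1) := by
  refine nontrivial_cohomology_succ (n := 0) (fun x => χ (x 0) : (trivial S A).cochain 1) ?_ ?_
  · funext x
    refine ((trivial S A).cobFun_one_apply _ x).trans ?_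
    exact show χ (x 1) - χ (x 0 * x 1) + χ (x 0) = 0 by rw [hχ]; abel
  · intro c hc
    refine hne (funext fun s => ?_)
    have h := congrFun hc ![s]
    rw [cobFun_zero_apply] at h
    exact h.symm.trans (sub_self (c ![]))

variable (M : SgModule S)

@[ext] structure Extension (f : M.cocycles 2) where
  base : S
  fiber : M.carrier

lemma cocycle_two_identity (f : M.cocycles 2) (s t u : S) :
    M.smul s ((f : M.cochain 2) ![t, u]) - (f : M.cochain 2) ![s * t, u]
      + (f : M.cochain 2) ![s, t * u] - (f : M.cochain 2) ![s, t] = 0 := by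
  have hf : M.cobFun (f : M.cochain 2) = 0 := f.2
  have h := congrFun hf ![s, t, u]
  rwa [cobFun_two_apply] at h

instance (f : M.cocycles 2) : Mul (M.Extension f) :=
  ⟨fun p q =>
    ⟨p.base * q.base, p.fiber + M.smul p.base q.fiber - (f : M.cochain 2) ![p.base, q.base]⟩⟩

lemma Extension.mul_base (f : M.cocycles 2) (p q : M.Extension f) :
    (p * q).base = p.base * q.base := rfl

lemma Extension.mul_fiber (f : M.cocycles 2) (p q : M.Extension f) :
    (p * q).fiber = p.fiber + M.smul p.base q.fiber - (f : M.cochain 2) ![p.base, q.base] := rfl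

instance (f : M.cocycles 2) : Semigroup (M.Extension f) where
  mul_assoc p q r := by
    ext
    · simp only [Extension.mul_base, mul_assoc]
    · simp only [Extension.mul_fiber, Extension.mul_base, M.smul_add, smul_sub, M.mul_smul]
      rw [← sub_eq_zero, ← M.cocycle_two_identity f p.base q.base r.base]
      abel

lemma exists_cobFun_eq_of_section (f : M.cocycles 2) (σ : S →ₙ* M.Extension f)
    (hσ : ∀ s, (σ s).base = s) : ∃ g : M.cochain 1, M.cobFun g = f := by
  refine ⟨fun x => (σ (x 0)).fiber, funext fun x => ?_⟩
  have hσmul := congrArg Extension.fiber (map_mul σ (x 0) (x 1))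
  rw [Extension.mul_fiber, hσ, hσ] at hσmul
  have hx : x = ![x 0, x 1] := by ext i; fin_cases i <;> rfl
  rw [cobFun_one_apply, hx]
  simp only [Matrix.cons_val_zero, Matrix.cons_val_one, hσmul]
  abel

end SgModule

section Presentation

open SgModule FreeSemigroup

variable {X : Type} (P Q : FreeSemigroup X)

lemma relAPQ_le_ker {T : Type} [Semigroup T] (φ : FreeSemigroup (Option X) →ₙ* T)
    (h : φ (of none * map some P) = φ (map some Q)) : relAPQ X P Q ≤ Con.ker φ :=
  Con.conGen_le.2 fun _ _ ⟨hu, hv⟩ => by rw [Con.ker_rel, hu, hv, h]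

def relAPQ.lift {T : Type} [Semigroup T] (φ : FreeSemigroup (Option X) →ₙ* T)
    (h : φ (of none * map some P) = φ (map some Q)) : (relAPQ X P Q).Quotient →ₙ* T where
  toFun s := Con.liftOn s φ fun _ _ huv => relAPQ_le_ker P Q φ h huv
  map_mul' s t := Con.induction_on₂ s t fun u v => map_mul φ u v

lemma relAPQ_exists_section (M : SgModule (relAPQ X P Q).Quotient) (f : M.cocycles 2) :
    ∃ σ : (relAPQ X P Q).Quotient →ₙ* M.Extension f, ∀ s, (σ s).base = s := by
  let Λ (c : Option X → M.carrier) : FreeSemigroup (Option X) →ₙ* M.Extension f :=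
    FreeSemigroup.lift fun y => ⟨(of y : FreeSemigroup (Option X)), c y⟩
  have hbase (c) (u : FreeSemigroup (Option X)) : (Λ c u).base = u :=
    FreeSemigroup.recOnMul u (fun _ => rfl) fun u v hu hv => by
      rw [map_mul, Extension.mul_base, hu, hv]
      rfl
  let a : (relAPQ X P Q).Quotient := (of none : FreeSemigroup (Option X))
  -- the value at `a` that solves the fiber component of `Λ (a P) = Λ Q`
  let r : M.carrier := (Λ 0 (map some Q)).fiber - M.smul a (Λ 0 (map some P)).fiber
    + (f : M.cochain 2) ![a, (map some P : FreeSemigroup (Option X))]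
  let c : Option X → M.carrier := fun y => y.elim r fun _ => 0
  have hsome (w : FreeSemigroup X) : Λ c (map some w) = Λ 0 (map some w) :=
    DFunLike.congr_fun (hom_ext (f := (Λ c).comp (map some)) (g := (Λ 0).comp (map some)) rfl) w
  have hrel : Λ c (of none * map some P) = Λ c (map some Q) := by
    ext
    · rw [hbase, hbase]
      exact (Con.eq _).2 (ConGen.Rel.of _ _ ⟨rfl, rfl⟩)
    · rw [map_mul, Extension.mul_fiber, hsome, hsome, hbase, hbase]
      show r + M.smul a _ - _ = _
      simp only [r]
      abel
  exact ⟨relAPQ.lift P Q (Λ c) hrel, fun s => Con.induction_on s (hbase c)⟩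

theorem cocyclesAreCobounds_one_relAPQ : CocyclesAreCobounds (relAPQ X P Q).Quotient 1 :=
  fun M f hf =>
    have ⟨σ, hσ⟩ := relAPQ_exists_section P Q M ⟨f, hf⟩
    M.exists_cobFun_eq_of_section ⟨f, hf⟩ σ hσ

def relAPQ.degreeWord : FreeSemigroup (Option X) →ₙ* Multiplicative ℤ :=
  FreeSemigroup.lift fun y => Multiplicative.ofAdd (y.elim ((Q.length : ℤ) - P.length) 1)

lemma relAPQ.degreeWord_map_some (w : FreeSemigroup X) :
    relAPQ.degreeWord P Q (map some w) = Multiplicative.ofAdd (w.length : ℤ) :=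
  FreeSemigroup.recOnMul w (fun _ => rfl) fun u v hu hv => by
    rw [map_mul, map_mul, hu, hv, length_mul, Nat.cast_add, ofAdd_add]

def relAPQ.degree : (relAPQ X P Q).Quotient →ₙ* Multiplicative ℤ :=
  relAPQ.lift P Q (relAPQ.degreeWord P Q) <| by
    rw [map_mul, relAPQ.degreeWord_map_some, relAPQ.degreeWord_map_some, relAPQ.degreeWord,
      lift_of, Option.elim_none, ← ofAdd_add, sub_add_cancel]

lemma relAPQ.degree_ne_zero : (fun s => (relAPQ.degree P Q s).toAdd) ≠ 0 := fun h =>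
  one_ne_zero (congrFun h (of (some P.head) : FreeSemigroup (Option X)))

end Presentation

/-- For `S = ⟨a, X ∣ aP = Q⟩` with `P, Q` nonempty words not
containing the letter `a`, one has `H²(S, A) = 0` for every `S`-module `A`,
and `c.d. S = 1`. -/
theorem cd_one_of_relation_aP_eq_Q (X : Type) (P Q : FreeSemigroup X) :
    (∀ M : SgModule (relAPQ X P Q).Quotient, Subsingleton (M.cohomology 2)) ∧
      cohDim (relAPQ X P Q).Quotient = 1 := by
  have hH2 := cocyclesAreCobounds_one_relAPQ P Q
  have hH1 : Nontrivial ((SgModule.trivial _ ℤ).cohomology 1) :=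
    SgModule.nontrivial_cohomology_one_trivial (fun s => (relAPQ.degree P Q s).toAdd)
      (fun s t => by rw [map_mul, toAdd_mul]) (relAPQ.degree_ne_zero P Q)
  exact ⟨fun M => SgModule.subsingleton_cohomology_succ (hH2 M),
    le_antisymm (cohDim_le hH2) (le_cohDim _ hH1)⟩
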